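/- Let a, b be coefficient sequences with b₀ ≠ 0, so that b is invertible in the ψ-ring of Ward, and let b⁻¹ denote its inverse with respect to the Ward product. Then the ψ-derivative of the quotient satisfies the quotient ψ-rule: D(a·b⁻¹) = (D a − (a·b⁻¹) ∗_{1,0} D b)·b⁻¹. -/

import Mathlib

open Finset

/-- The ψ-factorial: ψₙ! = ψ₁ψ₂⋯ψₙ, with ψ₀! = 1. -/
noncomputable def psiFact (ψ : ℕ → ℂ) : ℕ → ℂ
  | 0 => 1
  | n + 1 => psiFact ψ n * ψ (n + 1)

/-- The ψ-binomial coefficient binomψ(n,k) = ψₙ!/(ψₖ!·ψ_{n−k}!). -/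
noncomputable def psiBinom (ψ : ℕ → ℂ) (n k : ℕ) : ℂ :=
  psiFact ψ n / (psiFact ψ k * psiFact ψ (n - k))

/-- The Fontané numbers F(n,k) = (ψₙ − ψₖ)/ψ_{n−k}. -/
noncomputable def Fker (ψ : ℕ → ℂ) (n k : ℕ) : ℂ :=
  (ψ n - ψ k) / ψ (n - k)

/-- The Ward product of coefficient sequences. -/
noncomputable def wardMul (ψ : ℕ → ℂ) (a b : ℕ → ℂ) (n : ℕ) : ℂ :=
  ∑ k ∈ range (n + 1), psiBinom ψ n k * a k * b (n - k)

/-- The Fontané product ∗_{i,j} of coefficient sequences. -/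
noncomputable def fontane (ψ : ℕ → ℂ) (i j : ℕ) (a b : ℕ → ℂ) (n : ℕ) : ℂ :=
  ∑ k ∈ range (n + 1), Fker ψ (n + i) (k + j) * psiBinom ψ n k * a k * b (n - k)

/-- The ψ-derivative on coefficient sequences: the shift (D a)ₙ = a_{n+1}. -/
def Dpsi (a : ℕ → ℂ) (n : ℕ) : ℂ := a (n + 1)

/-!
Dividing the coefficients by the ψ-factorials, `aₙ ↦ aₙ / ψₙ!`, turns the Ward product into the
Cauchy product of formal power series, so Ward's ring is isomorphic to `ℂ⟦X⟧`. Writing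
`c = a·b⁻¹`, we have `c·b = a`, and the ψ-Leibniz rule `D(c·b) = D c·b + c ∗_{1,0} D b` (a
consequence of the ψ-Pascal identity) gives `D c·b = D a − c ∗_{1,0} D b`; multiply by `b⁻¹`.
-/

open PowerSeries

variable {ψ : ℕ → ℂ}

section PsiFactorial

variable (hψ : ∀ n : ℕ, 1 ≤ n → ψ n ≠ 0)
include hψ

theorem psiFact_ne_zero : ∀ n, psiFact ψ n ≠ 0
  | 0 => one_ne_zero
  | n + 1 => mul_ne_zero (psiFact_ne_zero n) (hψ _ n.succ_pos)

theorem psiBinom_zero_right (n : ℕ) : psiBinom ψ n 0 = 1 := by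
  simp [psiBinom, psiFact, psiFact_ne_zero hψ n]

theorem psiBinom_succ_succ {k n : ℕ} (hk : k ≤ n) :
    psiBinom ψ (n + 1) (k + 1) = psiBinom ψ n k + Fker ψ (n + 1) (k + 1) * psiBinom ψ n (k + 1) := by
  obtain rfl | hlt := hk.eq_or_lt
  · simp [psiBinom, Fker, psiFact, psiFact_ne_zero hψ, hψ (k + 1) k.succ_pos]
  obtain ⟨m, rfl⟩ : ∃ m, n = k + m + 1 := ⟨n - k - 1, by omega⟩
  simp only [psiBinom, Fker, psiFact, show k + m + 1 + 1 - (k + 1) = m + 1 by omega,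
    show k + m + 1 - k = m + 1 by omega, show k + m + 1 - (k + 1) = m by omega]
  field_simp [psiFact_ne_zero hψ, hψ (m + 1) m.succ_pos, hψ (k + 1) k.succ_pos]
  ring

end PsiFactorial

noncomputable def psiEGF (ψ : ℕ → ℂ) (a : ℕ → ℂ) : ℂ⟦X⟧ :=
  PowerSeries.mk fun n => a n / psiFact ψ n

theorem psiEGF_injective (hψ : ∀ n : ℕ, 1 ≤ n → ψ n ≠ 0) : Function.Injective (psiEGF ψ) := by
  intro a b h
  funext n
  simpa [psiEGF, div_left_inj' (psiFact_ne_zero hψ n)] using congrArg (coeff n) h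

theorem psiEGF_wardMul (hψ : ∀ n : ℕ, 1 ≤ n → ψ n ≠ 0) (a b : ℕ → ℂ) :
    psiEGF ψ (wardMul ψ a b) = psiEGF ψ a * psiEGF ψ b := by
  ext n
  rw [coeff_mul, Nat.sum_antidiagonal_eq_sum_range_succ_mk]
  simp only [psiEGF, coeff_mk, wardMul, psiBinom, sum_div]
  refine sum_congr rfl fun k _ => ?_
  field_simp [psiFact_ne_zero hψ]

theorem psiEGF_delta : psiEGF ψ (fun n => if n = 0 then 1 else 0) = 1 := by
  ext n
  rcases n with _ | n <;> simp [psiEGF, psiFact, coeff_one]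

theorem Dpsi_wardMul (hψ0 : ψ 0 = 0) (hψ : ∀ n : ℕ, 1 ≤ n → ψ n ≠ 0) (u v : ℕ → ℂ) (n : ℕ) :
    Dpsi (wardMul ψ u v) n = wardMul ψ (Dpsi u) v n + fontane ψ 1 0 u (Dpsi v) n := by
  -- the extra term `k = n + 1` vanishes since `F(n+1, n+1) = 0`
  have hF : fontane ψ 1 0 u (Dpsi v) n
      = ∑ k ∈ range (n + 2), Fker ψ (n + 1) k * psiBinom ψ n k * u k * v (n + 1 - k) := by
    rw [sum_range_succ, Fker, sub_self, zero_div, zero_mul, zero_mul, zero_mul, add_zero]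
    refine sum_congr rfl fun k hk => ?_
    simp only [Dpsi, add_zero, Nat.sub_add_comm (mem_range_succ_iff.mp hk)]
  have hF0 : Fker ψ (n + 1) 0 = 1 := by
    rw [Fker, hψ0, sub_zero, Nat.sub_zero, div_self (hψ _ n.succ_pos)]
  rw [hF, Dpsi, wardMul, sum_range_succ' _ (n + 1),
    sum_range_succ' (fun k => Fker ψ (n + 1) k * _ * _ * _), wardMul, ← add_assoc,
    ← sum_add_distrib, hF0, psiBinom_zero_right hψ, psiBinom_zero_right hψ]
  congr 1
  · refine sum_congr rfl fun k hk => ?_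
    rw [psiBinom_succ_succ hψ (mem_range_succ_iff.mp hk), Nat.add_sub_add_right, Dpsi]
    ring
  · ring

theorem Dpsi_quotient_general (ψ : ℕ → ℂ) (hψ0 : ψ 0 = 0) (hψ : ∀ n : ℕ, 1 ≤ n → ψ n ≠ 0)
    (a b binv : ℕ → ℂ)
    (hinv : wardMul ψ b binv = fun n => if n = 0 then 1 else 0) :
    Dpsi (wardMul ψ a binv)
      = wardMul ψ
          (fun n => Dpsi a n - fontane ψ 1 0 (wardMul ψ a binv) (Dpsi b) n) binv := by
  set c := wardMul ψ a binv
  have hb : psiEGF ψ b * psiEGF ψ binv = 1 := by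
    rw [← psiEGF_wardMul hψ, hinv, psiEGF_delta]
  have hcb : wardMul ψ c b = a := psiEGF_injective hψ <| by
    rw [psiEGF_wardMul hψ, psiEGF_wardMul hψ, mul_assoc, mul_comm (psiEGF ψ binv), hb, mul_one]
  have hDc : (fun n => Dpsi a n - fontane ψ 1 0 c (Dpsi b) n) = wardMul ψ (Dpsi c) b := by
    funext n
    rw [← hcb, Dpsi_wardMul hψ0 hψ, add_sub_cancel_right]
  apply psiEGF_injective hψ
  rw [hDc, psiEGF_wardMul hψ, psiEGF_wardMul hψ, mul_assoc, hb, mul_one]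

/-- The quotient ψ-rule: D(a·b⁻¹) = (D a − (a·b⁻¹) ∗_{1,0} D b)·b⁻¹. -/
theorem Dpsi_quotient (ψ : ℕ → ℂ) (hψ0 : ψ 0 = 0) (hψ1 : ψ 1 = 1) (hψ : ∀ n : ℕ, 1 ≤ n → ψ n ≠ 0)
    (a b binv : ℕ → ℂ) (hb : b 0 ≠ 0)
    (hinv : wardMul ψ b binv = fun n => if n = 0 then 1 else 0) :
    Dpsi (wardMul ψ a binv)
      = wardMul ψ
          (fun n => Dpsi a n - fontane ψ 1 0 (wardMul ψ a binv) (Dpsi b) n) binv :=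
  Dpsi_quotient_general ψ hψ0 hψ a b binv hinv
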